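/- arXiv:1204.4399 — 2 statements merged into one kernel-verified Lean document; each statement's English description precedes it below -/
import Mathlib

section
/- A homogeneous form g = ∑_{|I|=t} E_I v^I of degree t in v₁,…,v_k is the symbol of a Laplace equation of order t for V at P (i.e. ∑_{|I|=t} E_I x̂^I(u₀) ∈ T^(t−1)(u₀)) if and only if g is apolar to every element of the t-th fundamental form of V at P, i.e. ∑_{|I|=t} E_I ∂^I F^t_ξ = 0 for every linear functional ξ ∈ (ℂ^{N+1})* vanishing on T^(t−1)(u₀). -/
/- Common setup: iterated partial derivatives, multi-indices, osculating spaces,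
fundamental forms for a local parametrisation `x : ℂ^k → ℂ^N` of a variety
`V ⊂ ℙ^N`, lifted to `x̂ = (1, x) : ℂ^k → ℂ^{N+1}`. -/

open scoped BigOperators

noncomputable section

/-- Iterated partial derivative of `f` along a list of coordinate directions. -/
def pderivList {k : ℕ} {E : Type} [NormedAddCommGroup E] [NormedSpace ℂ E] :
    List (Fin k) → ((Fin k → ℂ) → E) → ((Fin k → ℂ) → E)
  | [], f => f
  | j :: L, f => fun u => fderiv ℂ (pderivList L f) u (Pi.single j 1)

/-- The canonical list of coordinate directions attached to a multi-index `I : Fin k → ℕ`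
(the direction `j` repeated `I j` times). -/
def idxList {k : ℕ} (I : Fin k → ℕ) : List (Fin k) :=
  (List.finRange k).flatMap fun j => List.replicate (I j) j

/-- The partial derivative `∂^I f = ∂^{|I|} f / ∂u₁^{i₁} ⋯ ∂u_k^{i_k}`. -/
def pd {k : ℕ} {E : Type} [NormedAddCommGroup E] [NormedSpace ℂ E]
    (I : Fin k → ℕ) (f : (Fin k → ℂ) → E) : (Fin k → ℂ) → E :=
  pderivList (idxList I) f

/-- The finset of multi-indices `I : Fin k → ℕ` of total degree `|I| ≤ r`. -/
def degLE (k r : ℕ) : Finset (Fin k → ℕ) :=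
  (Finset.Iic fun _ : Fin k => r).filter fun I => (∑ j, I j) ≤ r

/-- The finset of multi-indices `I : Fin k → ℕ` of total degree `|I| = r`. -/
def degEq (k r : ℕ) : Finset (Fin k → ℕ) :=
  (Finset.Iic fun _ : Fin k => r).filter fun I => (∑ j, I j) = r

/-- The lift `x̂(u) = (1, x(u))` of the parametrisation `x` to the affine cone `ℂ^{N+1}`. -/
def coneLift {k N : ℕ} (x : (Fin k → ℂ) → (Fin N → ℂ)) : (Fin k → ℂ) → (Fin (N + 1) → ℂ) :=
  fun u => Fin.cons 1 (x u)

/-- `osc x̂ s u` is the affine cone `T^(s)(u)` over the `s`-th osculating space at the point of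
parameter `u`: the span of all partial derivatives `x̂^I(u)` with `|I| ≤ s`. -/
def osc {k N : ℕ} (xhat : (Fin k → ℂ) → (Fin (N + 1) → ℂ)) (s : ℕ) (u : Fin k → ℂ) :
    Submodule ℂ (Fin (N + 1) → ℂ) :=
  Submodule.span ℂ {y | ∃ I : Fin k → ℕ, (∑ j, I j) ≤ s ∧ y = pd I xhat u}

/-- The degree-`r` form `F^r_ξ(v) = ξ(D^r x̂(u₀)(v,…,v))`, as a function of `v ∈ ℂ^k`. -/
def formOf {k N : ℕ} (xhat : (Fin k → ℂ) → (Fin (N + 1) → ℂ)) (u₀ : Fin k → ℂ) (r : ℕ)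
    (ξ : Module.Dual ℂ (Fin (N + 1) → ℂ)) : (Fin k → ℂ) → ℂ :=
  fun v => ξ (iteratedFDeriv ℂ r xhat u₀ fun _ => v)

/-- The `r`-th fundamental form `|I^r|` of `V` at `P`, as the set of the forms `F^r_ξ` for `ξ`
a linear functional vanishing on `T^(r-1)(u₀)`. -/
def fundSet {k N : ℕ} (xhat : (Fin k → ℂ) → (Fin (N + 1) → ℂ)) (u₀ : Fin k → ℂ) (r : ℕ) :
    Set ((Fin k → ℂ) → ℂ) :=
  { F | ∃ ξ : Module.Dual ℂ (Fin (N + 1) → ℂ),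
      (∀ y ∈ osc xhat (r - 1) u₀, ξ y = 0) ∧ F = formOf xhat u₀ r ξ }

/-- The `r`-th fundamental form `|I^r|` as a subspace of the space of functions of `v`. -/
def fundForm {k N : ℕ} (xhat : (Fin k → ℂ) → (Fin (N + 1) → ℂ)) (u₀ : Fin k → ℂ) (r : ℕ) :
    Submodule ℂ ((Fin k → ℂ) → ℂ) :=
  Submodule.span ℂ (fundSet xhat u₀ r)

/-- The linear map sending the coefficients `(E_I)_{|I|=t}` of a degree-`t` form to
`∑_{|I|=t} E_I x̂^I(u₀) ∈ ℂ^{N+1}`; a form is the symbol of a Laplace equation of order `t`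
iff its coefficients are mapped into `T^(t-1)(u₀)`. -/
def symbolMap {k N : ℕ} (xhat : (Fin k → ℂ) → (Fin (N + 1) → ℂ)) (u₀ : Fin k → ℂ) (t : ℕ) :
    ({I : Fin k → ℕ // I ∈ degEq k t} → ℂ) →ₗ[ℂ] (Fin (N + 1) → ℂ) where
  toFun E := ∑ I : {I : Fin k → ℕ // I ∈ degEq k t}, E I • pd I.1 xhat u₀
  map_add' a b := by simp [add_smul, Finset.sum_add_distrib]
  map_smul' c a := by simp [smul_smul, Finset.smul_sum]

/-- The parametrisation `Φ_t(u, λ) = ∑_{|I| ≤ t} λ_I x̂^I(u)` of the affine cone over the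
`t`-th osculating variety `Tan^t(V)`. -/
def tanPhi {k N : ℕ} (xhat : (Fin k → ℂ) → (Fin (N + 1) → ℂ)) (t : ℕ) :
    ((Fin k → ℂ) × ({I : Fin k → ℕ // I ∈ degLE k t} → ℂ)) → (Fin (N + 1) → ℂ) :=
  fun p => ∑ I : {I : Fin k → ℕ // I ∈ degLE k t}, p.2 I • pd I.1 xhat p.1

/-- The rank of the Jacobian matrix of a linear system `S` of degree-`r` forms:
the maximum over `v ∈ ℂ^k` of the dimension of the span of the gradients at `v`
of the members of `S`. -/
def jacRank (k : ℕ) (S : Set ((Fin k → ℂ) → ℂ)) : ℕ :=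
  sSup {r : ℕ | ∃ v : Fin k → ℂ,
    r = Module.finrank ℂ
      ↥(Submodule.span ℂ {g : Fin k → ℂ | ∃ F ∈ S, g = fun j => pd (Pi.single j 1) F v})}

/-- The coefficients of the reducible degree-`(t+1)` form
`(∑_j w_j v_j) · (∑_{|I| = t} λ_I v^I)`. -/
def prodSymb {k : ℕ} (t : ℕ) (w : Fin k → ℂ) (lam : {I : Fin k → ℕ // I ∈ degLE k t} → ℂ)
    (J : Fin k → ℕ) : ℂ :=
  ∑ j : Fin k,
    if h : 1 ≤ J j ∧ (J - Pi.single j 1 : Fin k → ℕ) ∈ degLE k t ∧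
        (∑ i, (J - Pi.single j 1 : Fin k → ℕ) i) = t
    then w j * lam ⟨(J - Pi.single j 1 : Fin k → ℕ), h.2.1⟩ else 0

/- Differentiating `F^t_ξ(v) = ξ(D^t x̂(u₀)(v,…,v))` along a multi-index `I` with `|I| = t`
gives the constant `t! ξ(x̂^I(u₀))`, because `D^t x̂(u₀)` is symmetric (partial derivatives of a
smooth map commute). Hence `g` is apolar to `F^t_ξ` iff `ξ` kills `∑ E_I x̂^I(u₀)`, and a vector
lies in `T^(t-1)(u₀)` iff every functional vanishing on `T^(t-1)(u₀)` kills it. -/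

open scoped ContDiff Nat

section PartialDerivatives

variable {k : ℕ} {E : Type} [NormedAddCommGroup E] [NormedSpace ℂ E]
  {U : Set (Fin k → ℂ)} {f : (Fin k → ℂ) → E}

theorem contDiffOn_pderivList (hU : IsOpen U) (hf : ContDiffOn ℂ ∞ f U) :
    ∀ L : List (Fin k), ContDiffOn ℂ ∞ (pderivList L f) U
  | [] => hf
  | _ :: L => ((contDiffOn_pderivList hU hf L).fderiv_of_isOpen hU le_rfl).clm_apply
      contDiffOn_const

theorem iteratedFDeriv_single_eq_pderivList (hU : IsOpen U) (hf : ContDiffOn ℂ ∞ f U) :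
    ∀ {n : ℕ} (b : Fin n → Fin k) {u : Fin k → ℂ}, u ∈ U →
      iteratedFDeriv ℂ n f u (fun i => Pi.single (b i) 1) = pderivList (List.ofFn b) f u
  | 0, b, u, _ => by simp [pderivList]
  | n + 1, b, u, hu => by
    have hnhds : pderivList (List.ofFn (Fin.tail b)) f =ᶠ[nhds u]
        fun u' => iteratedFDeriv ℂ n f u' (fun i => Pi.single (Fin.tail b i) 1) :=
      Filter.eventually_of_mem (hU.mem_nhds hu) fun u' hu' =>
        (iteratedFDeriv_single_eq_pderivList hU hf (Fin.tail b) hu').symm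
    have hdiff : DifferentiableAt ℂ (iteratedFDeriv ℂ n f) u :=
      (hf.contDiffAt (hU.mem_nhds hu)).differentiableAt_iteratedFDeriv
        (WithTop.coe_lt_coe.2 (ENat.natCast_lt_top n))
    rw [iteratedFDeriv_succ_apply_left, List.ofFn_succ]
    show _ = fderiv ℂ (pderivList (List.ofFn (Fin.tail b)) f) u (Pi.single (b 0) 1)
    rw [hnhds.fderiv_eq, fderiv_continuousMultilinear_apply_const_apply hdiff]
    rfl

theorem pderivList_swap (hU : IsOpen U) (hf : ContDiffOn ℂ ∞ f U) (a b : Fin k)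
    (L : List (Fin k)) {u : Fin k → ℂ} (hu : u ∈ U) :
    pderivList (a :: b :: L) f u = pderivList (b :: a :: L) f u := by
  set g := pderivList L f
  have hg : ContDiffAt ℂ ∞ g u := (contDiffOn_pderivList hU hf L).contDiffAt (hU.mem_nhds hu)
  have hg' : DifferentiableAt ℂ (fderiv ℂ g) u :=
    (hg.fderiv_right (m := 1) (WithTop.coe_le_coe.2 le_top)).differentiableAt one_ne_zero
  have hsecond : ∀ c d : Fin k,
      pderivList (c :: d :: L) f u = fderiv ℂ (fderiv ℂ g) u (Pi.single c 1) (Pi.single d 1) := by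
    intro c d
    show fderiv ℂ (fun u' => fderiv ℂ g u' (Pi.single d 1)) u (Pi.single c 1) = _
    rw [fderiv_clm_apply hg' (differentiableAt_const _)]
    simp
  have h2 : minSmoothness ℂ 2 ≤ ∞ := by
    rw [minSmoothness_of_isRCLikeNormedField]
    exact WithTop.coe_le_coe.2 le_top
  rw [hsecond, hsecond, hg.isSymmSndFDerivAt h2]

theorem pderivList_perm (hU : IsOpen U) (hf : ContDiffOn ℂ ∞ f U) {L L' : List (Fin k)}
    (h : L.Perm L') : Set.EqOn (pderivList L f) (pderivList L' f) U := by
  induction h with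
  | nil => exact Set.eqOn_refl _ _
  | cons a _ ih =>
    intro u hu
    show fderiv ℂ _ u _ = fderiv ℂ _ u _
    rw [(ih.eventuallyEq_of_mem (hU.mem_nhds hu)).fderiv_eq]
  | swap a b L => exact fun u hu => pderivList_swap hU hf b a L hu
  | trans _ _ ih₁ ih₂ => exact ih₁.trans ih₂

theorem length_idxList (I : Fin k → ℕ) : (idxList I).length = ∑ j, I j := by
  simp [idxList, List.length_flatMap, ← List.ofFn_eq_map, List.sum_ofFn]

theorem exists_ofFn_eq_idxList {I : Fin k → ℕ} {t : ℕ} (hI : ∑ j, I j = t) :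
    ∃ b : Fin t → Fin k, List.ofFn b = idxList I := by
  subst hI
  rw [← length_idxList]
  exact ⟨_, List.ofFn_getElem⟩

end PartialDerivatives

section FundamentalForm

variable {k N : ℕ}

theorem contDiffOn_coneLift {n : WithTop ℕ∞} {U : Set (Fin k → ℂ)}
    {x : (Fin k → ℂ) → (Fin N → ℂ)} (hx : ContDiffOn ℂ n x U) :
    ContDiffOn ℂ n (coneLift x) U :=
  contDiffOn_pi.2 <| Fin.cases contDiffOn_const (contDiffOn_pi.1 hx)

theorem pd_formOf_eq_factorial_mul {U : Set (Fin k → ℂ)} (hU : IsOpen U)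
    {xhat : (Fin k → ℂ) → (Fin (N + 1) → ℂ)} (hxhat : ContDiffOn ℂ ∞ xhat U)
    {u₀ : Fin k → ℂ} (hu₀ : u₀ ∈ U) {t : ℕ}
    (ξ : Module.Dual ℂ (Fin (N + 1) → ℂ)) {I : Fin k → ℕ} (hI : ∑ j, I j = t)
    (v : Fin k → ℂ) :
    pd I (formOf xhat u₀ t ξ) v = t ! * ξ (pd I xhat u₀) := by
  obtain ⟨b, hb⟩ := exists_ofFn_eq_idxList hI
  set W := (LinearMap.toContinuousLinearMap ξ).compContinuousMultilinearMap
    (iteratedFDeriv ℂ t xhat u₀)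
  have hF : formOf xhat u₀ t ξ = fun v => W (fun _ => v) := rfl
  have hFsmooth : ContDiff ℂ ∞ (formOf xhat u₀ t ξ) :=
    W.contDiff.comp (contDiff_pi.2 fun _ => contDiff_id)
  have hterm : ∀ σ : Equiv.Perm (Fin t),
      W (fun i => Pi.single (b (σ i)) 1) = ξ (pd I xhat u₀) := fun σ => by
    show ξ (iteratedFDeriv ℂ t xhat u₀ fun i => Pi.single ((b ∘ σ) i) 1) = _
    rw [iteratedFDeriv_single_eq_pderivList hU hxhat _ hu₀, pd, ← hb,
      pderivList_perm hU hxhat (Equiv.Perm.ofFn_comp_perm σ b) hu₀]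
  rw [pd, ← hb, ← iteratedFDeriv_single_eq_pderivList isOpen_univ hFsmooth.contDiffOn _
    (Set.mem_univ v), hF, W.iteratedFDeriv_comp_diagonal]
  simp [hterm, Fintype.card_perm]

end FundamentalForm

theorem laplace_symbol_iff_apolar_to_fundamental_form_general (k N t : ℕ)
    (U : Set (Fin k → ℂ)) (hU : IsOpen U) (u₀ : Fin k → ℂ) (hu₀ : u₀ ∈ U)
    (x : (Fin k → ℂ) → (Fin N → ℂ)) (hx : ContDiffOn ℂ (⊤ : ℕ∞) x U)
    (E : (Fin k → ℕ) → ℂ) :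
    (∑ I ∈ degEq k t, E I • pd I (coneLift x) u₀) ∈ osc (coneLift x) (t - 1) u₀ ↔
      ∀ ξ : Module.Dual ℂ (Fin (N + 1) → ℂ),
        (∀ y ∈ osc (coneLift x) (t - 1) u₀, ξ y = 0) →
        (∑ I ∈ degEq k t, E I • pd I (formOf (coneLift x) u₀ t ξ)) = 0 := by
  have hsum : ∀ ξ : Module.Dual ℂ (Fin (N + 1) → ℂ),
      ∑ I ∈ degEq k t, E I • pd I (formOf (coneLift x) u₀ t ξ)
        = fun _ => (t ! : ℂ) * ξ (∑ I ∈ degEq k t, E I • pd I (coneLift x) u₀) := by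
    intro ξ
    funext v
    simp only [Finset.sum_apply, Pi.smul_apply, map_sum, map_smul, Finset.mul_sum]
    refine Finset.sum_congr rfl fun I hI => ?_
    rw [pd_formOf_eq_factorial_mul hU (contDiffOn_coneLift hx) hu₀ ξ (Finset.mem_filter.1 hI).2,
      smul_eq_mul, smul_eq_mul, mul_left_comm]
  simp_rw [hsum, funext_iff, Pi.zero_apply, mul_eq_zero, Nat.cast_eq_zero,
    Nat.factorial_ne_zero, false_or, forall_const]
  rw [← Subspace.forall_mem_dualAnnihilator_apply_eq_zero_iff]
  simp only [Submodule.mem_dualAnnihilator]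

/-- A degree-`t` form `g = ∑_{|I|=t} E_I v^I` is the symbol of a Laplace equation of order
`t` for `V` at `P` iff it is apolar to every member `F^t_ξ` of the `t`-th fundamental form. -/
theorem laplace_symbol_iff_apolar_to_fundamental_form (k N t : ℕ) (hk : 1 ≤ k) (hN : 1 ≤ N) (ht : 1 ≤ t)
    (U : Set (Fin k → ℂ)) (hU : IsOpen U) (u₀ : Fin k → ℂ) (hu₀ : u₀ ∈ U)
    (x : (Fin k → ℂ) → (Fin N → ℂ)) (hx : ContDiffOn ℂ (⊤ : ℕ∞) x U)
    (E : (Fin k → ℕ) → ℂ) :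
    (∑ I ∈ degEq k t, E I • pd I (coneLift x) u₀) ∈ osc (coneLift x) (t - 1) u₀ ↔
      ∀ ξ : Module.Dual ℂ (Fin (N + 1) → ℂ),
        (∀ y ∈ osc (coneLift x) (t - 1) u₀, ξ y = 0) →
        (∑ I ∈ degEq k t, E I • pd I (formOf (coneLift x) u₀ t ξ)) = 0 :=
  laplace_symbol_iff_apolar_to_fundamental_form_general k N t U hU u₀ hu₀ x hx E

end
end

section
/- Assume x is analytic on a connected open set U, that T^(t)(u) = T^(t−1)(u) for every u ∈ U, and that dim_ℂ T^(t−1)(u) is constant on U. Then the subspace T^(t−1)(u) is constant, T^(t−1)(u) = T^(t−1)(u₀) for all u ∈ U, and in particular x̂(u) ∈ T^(t−1)(u₀) for all u ∈ U; i.e., V is contained in the linear subspace ℙ^{d_{t−1}} = ℙ(T^(t−1)(u₀)) of ℙ^N. -/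
/- Common setup: iterated partial derivatives, multi-indices, osculating spaces,
fundamental forms for a local parametrisation `x : ℂ^k → ℂ^N` of a variety
`V ⊂ ℙ^N`, lifted to `x̂ = (1, x) : ℂ^k → ℂ^{N+1}`. -/

open scoped BigOperators

noncomputable section

/-!
If `T^(s)` has constant rank and `T^(s+1) = T^(s)`, then `T^(s)` is closed under
differentiation. Near a point `u`, write a section of `T^(s)` in the frame of partial
derivatives `x̂^I`, `|I| ≤ s`, restricted to a complement of its kernel at `u`. Inverting the
frame against a left inverse of its value at `u` gives differentiable coefficients. By the
product rule, the derivative of the section at `u` lies in the span of the `x̂^I(u)` and the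
`x̂^(I + e_j)(u)`, which is `T^(s+1)(u) = T^(s)(u)`.

Hence every iterated partial derivative of `x̂` at `u₀` lies in `W = T^(s)(u₀)`. A linear form
that vanishes on `W` therefore kills all Taylor coefficients of each `x̂^I` at `u₀`. By the
identity theorem on the connected set `U`, it kills `x̂^I` on all of `U`. So `T^(s)(u) ≤ W`,
and the two spaces are equal because they have the same dimension.
-/

open Function Filter Topology Module

section ConstantRank

variable {𝕜 : Type*} [NontriviallyNormedField 𝕜] [CompleteSpace 𝕜]
  {E F G : Type*} [NormedAddCommGroup E] [NormedSpace 𝕜 E]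
  [NormedAddCommGroup F] [NormedSpace 𝕜 F] [FiniteDimensional 𝕜 F]
  [NormedAddCommGroup G] [NormedSpace 𝕜 G]
  {A : E → G →L[𝕜] F} {g : E → F} {u : E}

theorem fderiv_apply_mem_range_sup_of_injective (hA : DifferentiableAt 𝕜 A u)
    (hinj : Injective (A u)) (hg : DifferentiableAt 𝕜 g u)
    (hgA : ∀ᶠ v in 𝓝 u, g v ∈ LinearMap.range (A v).toLinearMap) (w : E) :
    fderiv 𝕜 g u w ∈
      LinearMap.range (A u).toLinearMap ⊔ LinearMap.range (fderiv 𝕜 A u w).toLinearMap := by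
  have : FiniteDimensional 𝕜 G := Module.Finite.of_injective (A u).toLinearMap hinj
  have : CompleteSpace G := FiniteDimensional.complete 𝕜 G
  obtain ⟨π, hπ⟩ := ContinuousLinearMap.HasLeftInverse.of_injective_of_finiteDimensional hinj
  set B : E → G →L[𝕜] G := fun v => π.comp (A v)
  have hBu : IsUnit (B u) := by
    rw [show B u = 1 from ContinuousLinearMap.ext hπ]
    exact isUnit_one
  have hB : DifferentiableAt 𝕜 B u := (differentiableAt_const π).clm_comp hA
  have hunit : ∀ᶠ v in 𝓝 u, IsUnit (B v) :=
    hB.continuousAt.eventually (Units.isOpen.mem_nhds hBu)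
  set c : E → G := fun v => Ring.inverse (B v) (π (g v))
  have hc : DifferentiableAt 𝕜 c u := (hB.inverse hBu).clm_apply (π.differentiableAt.comp u hg)
  have hgc : g =ᶠ[𝓝 u] fun v => A v (c v) := by
    filter_upwards [hgA, hunit] with v ⟨d, hd⟩ hv
    have hcd : c v = d := calc
      c v = Ring.inverse (B v) (B v d) := by simp [c, B, ← hd]
      _ = d := by rw [← mul_apply_eq_comp, Ring.inverse_mul_cancel _ hv, one_apply_eq_self]
    rw [hcd]
    exact hd.symm
  rw [hgc.fderiv_eq, fderiv_clm_apply hA hc]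
  exact add_mem (Submodule.mem_sup_left ⟨_, rfl⟩) (Submodule.mem_sup_right ⟨_, rfl⟩)

theorem fderiv_apply_mem_range_sup_of_finrank_range_eq [FiniteDimensional 𝕜 G]
    (hA : DifferentiableAt 𝕜 A u)
    (hrank : ∀ᶠ v in 𝓝 u, finrank 𝕜 (LinearMap.range (A v).toLinearMap) =
      finrank 𝕜 (LinearMap.range (A u).toLinearMap))
    (hg : DifferentiableAt 𝕜 g u)
    (hgA : ∀ᶠ v in 𝓝 u, g v ∈ LinearMap.range (A v).toLinearMap) (w : E) :
    fderiv 𝕜 g u w ∈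
      LinearMap.range (A u).toLinearMap ⊔ LinearMap.range (fderiv 𝕜 A u w).toLinearMap := by
  obtain ⟨C, hC⟩ := Submodule.exists_isCompl (LinearMap.ker (A u).toLinearMap)
  set A' : E → C →L[𝕜] F := fun v => (A v).comp C.subtypeL
  have hA' : DifferentiableAt 𝕜 A' u := hA.clm_comp (differentiableAt_const _)
  have hinj : Injective (A' u) := LinearMap.injective_domRestrict_iff.2 hC.symm.disjoint
  have hinj' : ∀ᶠ v in 𝓝 u, Injective (A' v) :=
    hA'.continuousAt.eventually (ContinuousLinearMap.isOpen_injective.mem_nhds hinj)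
  -- by rank-nullity, `A' v` has the rank of `A u`, hence the same range as `A v`
  have hrange : ∀ᶠ v in 𝓝 u,
      LinearMap.range (A' v).toLinearMap = LinearMap.range (A v).toLinearMap := by
    filter_upwards [hrank, hinj'] with v hv hv'
    refine Submodule.eq_of_le_of_finrank_le (LinearMap.range_comp_le_range _ _) ?_
    have h₁ := LinearMap.finrank_range_of_inj hv'
    have h₂ := LinearMap.finrank_range_add_finrank_ker (A u).toLinearMap
    have h₃ := Submodule.finrank_add_eq_of_isCompl hC
    omega
  have hmem := fderiv_apply_mem_range_sup_of_injective hA' hinj hg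
    (by filter_upwards [hgA, hrange] with v h₁ h₂; rwa [← h₂] at h₁) w
  have hd : fderiv 𝕜 A' u w = (fderiv 𝕜 A u w).comp C.subtypeL := by
    simp [A', fderiv_clm_comp hA (differentiableAt_const _)]
  rw [hd] at hmem
  exact (sup_le_sup (LinearMap.range_comp_le_range _ _) (LinearMap.range_comp_le_range _ _) :
    _ ≤ LinearMap.range (A u).toLinearMap ⊔ LinearMap.range (fderiv 𝕜 A u w).toLinearMap)
    hmem

end ConstantRank

theorem range_piRing_symm {𝕜 : Type*} [NontriviallyNormedField 𝕜] [CompleteSpace 𝕜]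
    {F : Type*} [NormedAddCommGroup F] [NormedSpace 𝕜 F]
    {ι : Type*} [Fintype ι] [DecidableEq ι] (f : ι → F) :
    LinearMap.range ((ContinuousLinearEquiv.piRing (𝕜 := 𝕜) ι).symm f).toLinearMap =
      Submodule.span 𝕜 (Set.range f) := by
  rw [← Fintype.range_linearCombination]
  congr 1
  ext a
  change (LinearEquiv.piRing 𝕜 F ι 𝕜).symm f (Pi.single a 1) = _
  simp [LinearEquiv.piRing_symm_apply, Fintype.linearCombination_apply]

section PartialDerivatives

variable {k : ℕ} {E : Type} [NormedAddCommGroup E] [NormedSpace ℂ E]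

theorem pderivList_append (L₁ L₂ : List (Fin k)) (f : (Fin k → ℂ) → E) :
    pderivList (L₁ ++ L₂) f = pderivList L₁ (pderivList L₂ f) := by
  induction L₁ with
  | nil => rfl
  | cons a L ih => simp only [List.cons_append, pderivList, ih]

theorem count_idxList (I : Fin k → ℕ) (j : Fin k) : (idxList I).count j = I j := by
  simp only [idxList, List.count_flatMap, ← Fin.sum_univ_def]
  simp [List.count_replicate]

theorem idxList_add_single_perm (I : Fin k → ℕ) (j : Fin k) :
    (idxList (I + Pi.single j 1)).Perm (j :: idxList I) := by
  refine List.perm_iff_count.2 fun a => ?_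
  rw [count_idxList, List.count_cons, count_idxList]
  by_cases h : a = j <;> simp [h, Ne.symm]

theorem idxList_zero : idxList (0 : Fin k → ℕ) = [] := by
  simp [idxList]

variable [CompleteSpace E] {U : Set (Fin k → ℂ)} {f : (Fin k → ℂ) → E} {u : Fin k → ℂ}

theorem AnalyticOnNhd.pderivList (hf : AnalyticOnNhd ℂ f U) (L : List (Fin k)) :
    AnalyticOnNhd ℂ (pderivList L f) U := by
  induction L with
  | nil => exact hf
  | cons a L ih =>
    intro u hu
    exact ((ContinuousLinearMap.apply ℂ E (Pi.single a 1)).analyticAt _).comp (ih.fderiv u hu)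

theorem pderivList_cons_cons_comm (hf : AnalyticOnNhd ℂ f U) (a b : Fin k) (L : List (Fin k))
    (hu : u ∈ U) : pderivList (a :: b :: L) f u = pderivList (b :: a :: L) f u := by
  have hg := hf.pderivList L u hu
  have hd : DifferentiableAt ℂ (fderiv ℂ (pderivList L f)) u := hg.fderiv.differentiableAt
  have hsymm : IsSymmSndFDerivAt ℂ (pderivList L f) u :=
    hg.contDiffAt.isSymmSndFDerivAt_of_omega
  simp only [pderivList, fderiv_clm_apply hd (differentiableAt_const _)]
  simpa using hsymm (Pi.single a 1) (Pi.single b 1)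

theorem pderivList_eqOn_of_perm (hU : IsOpen U) (hf : AnalyticOnNhd ℂ f U)
    {L₁ L₂ : List (Fin k)} (hp : L₁.Perm L₂) :
    Set.EqOn (pderivList L₁ f) (pderivList L₂ f) U := by
  induction hp with
  | nil => exact fun _ _ => rfl
  | cons a _ ih =>
    intro u hu
    simp only [pderivList]
    rw [(Filter.eventuallyEq_of_mem (hU.mem_nhds hu) ih).fderiv_eq]
  | swap a b L => exact fun u hu => pderivList_cons_cons_comm hf b a L hu
  | trans _ _ ih₁ ih₂ => exact fun u hu => (ih₁ hu).trans (ih₂ hu)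

theorem pd_add_single (hU : IsOpen U) (hf : AnalyticOnNhd ℂ f U) (I : Fin k → ℕ) (j : Fin k)
    (hu : u ∈ U) : pd (I + Pi.single j 1) f u = fderiv ℂ (pd I f) u (Pi.single j 1) :=
  pderivList_eqOn_of_perm hU hf (idxList_add_single_perm I j) hu

theorem pderivList_clm_comp {F : Type} [NormedAddCommGroup F] [NormedSpace ℂ F]
    (hU : IsOpen U) (hf : AnalyticOnNhd ℂ f U) (A : E →L[ℂ] F) (L : List (Fin k)) :
    Set.EqOn (pderivList L (A ∘ f)) (A ∘ pderivList L f) U := by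
  induction L with
  | nil => exact fun _ _ => rfl
  | cons a L ih =>
    intro u hu
    simp only [pderivList]
    rw [(Filter.eventuallyEq_of_mem (hU.mem_nhds hu) ih).fderiv_eq,
      fderiv_comp u A.differentiableAt (hf.pderivList L u hu).differentiableAt, A.fderiv]
    rfl

theorem iteratedFDeriv_apply_pi_single (hU : IsOpen U) (hf : AnalyticOnNhd ℂ f U) (n : ℕ)
    (r : Fin n → Fin k) (hu : u ∈ U) :
    iteratedFDeriv ℂ n f u (fun i => Pi.single (r i) 1) = pderivList (List.ofFn r) f u := by
  induction n generalizing u with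
  | zero => simp [pderivList]
  | succ n ih =>
    have heq : Set.EqOn (fun v => iteratedFDeriv ℂ n f v (fun i => Pi.single (Fin.tail r i) 1))
        (pderivList (List.ofFn (Fin.tail r)) f) U := fun v hv => ih (Fin.tail r) hv
    rw [List.ofFn_succ]
    change _ = fderiv ℂ (pderivList (List.ofFn (Fin.tail r)) f) u (Pi.single (r 0) 1)
    rw [← (Filter.eventuallyEq_of_mem (hU.mem_nhds hu) heq).fderiv_eq,
      fderiv_continuousMultilinear_apply_const_apply (hf.iteratedFDeriv n u hu).differentiableAt,
      iteratedFDeriv_succ_apply_left]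
    rfl

end PartialDerivatives

section IdentityTheorem

variable {k : ℕ} {E : Type} [NormedAddCommGroup E] [NormedSpace ℂ E] [CompleteSpace E]
  {U : Set (Fin k → ℂ)} {f : (Fin k → ℂ) → E} {u₀ u : Fin k → ℂ}

theorem eqOn_zero_of_pderivList_eq_zero (hU : IsOpen U) (hUc : IsPreconnected U)
    (hf : AnalyticOnNhd ℂ f U) (hu₀ : u₀ ∈ U) (hz : ∀ L, pderivList L f u₀ = 0) :
    Set.EqOn f 0 U := by
  have hiter : ∀ n, iteratedFDeriv ℂ n f u₀ = 0 := fun n =>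
    ContinuousMultilinearMap.toMultilinearMap_injective <|
      Module.Basis.ext_multilinear (fun _ => Pi.basisFun ℂ (Fin k)) fun r => by
        simpa [iteratedFDeriv_apply_pi_single hU hf n r hu₀] using hz _
  obtain ⟨p, r, hp⟩ := hf u₀ hu₀
  refine hf.eqOn_zero_of_preconnected_of_eventuallyEq_zero hUc hu₀ ?_
  filter_upwards [Metric.eball_mem_nhds u₀ hp.r_pos] with v hv
  have hsum := hp.hasSum_iteratedFDeriv (y := v - u₀) (by simpa [edist_eq_enorm_sub] using hv)
  simp only [hiter, zero_apply, smul_zero, add_sub_cancel] at hsum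
  exact hsum.unique hasSum_zero

theorem mem_of_forall_pderivList_mem [FiniteDimensional ℂ E] (hU : IsOpen U)
    (hUc : IsPreconnected U) (hf : AnalyticOnNhd ℂ f U) (hu₀ : u₀ ∈ U) {W : Submodule ℂ E}
    (hW : ∀ L, pderivList L f u₀ ∈ W) (hu : u ∈ U) : f u ∈ W := by
  by_contra hfu
  obtain ⟨ξ, hξu, hξW⟩ := Submodule.exists_dual_map_eq_bot_of_notMem hfu inferInstance
  let ξc := LinearMap.toContinuousLinearMap ξ
  refine hξu (eqOn_zero_of_pderivList_eq_zero hU hUc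
    (fun v hv => (ξc.analyticAt _).comp (hf v hv)) hu₀ (fun L => ?_) hu)
  rw [pderivList_clm_comp hU hf ξc L hu₀]
  exact LinearMap.mem_ker.1 (LinearMap.le_ker_iff_map.2 hξW (hW L))

end IdentityTheorem

section Osculating

variable {k N s : ℕ} {xhat : (Fin k → ℂ) → (Fin (N + 1) → ℂ)} {U : Set (Fin k → ℂ)}
  {u : Fin k → ℂ}

theorem mem_degLE {r : ℕ} {I : Fin k → ℕ} : I ∈ degLE k r ↔ ∑ j, I j ≤ r := by
  simp only [degLE, Finset.mem_filter, Finset.mem_Iic, and_iff_right_iff_imp]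
  exact fun h j => (Finset.single_le_sum (fun _ _ => Nat.zero_le _) (Finset.mem_univ j)).trans h

theorem pd_mem_osc {I : Fin k → ℕ} (hI : ∑ j, I j ≤ s) (u : Fin k → ℂ) :
    pd I xhat u ∈ osc xhat s u :=
  Submodule.subset_span ⟨I, hI, rfl⟩

theorem self_mem_osc (u : Fin k → ℂ) : xhat u ∈ osc xhat s u := by
  simpa [pd, idxList_zero, pderivList] using pd_mem_osc (xhat := xhat) (I := 0) (by simp) u

theorem osc_eq_span_range (s : ℕ) (u : Fin k → ℂ) :
    osc xhat s u =
      Submodule.span ℂ (Set.range fun I : {I // I ∈ degLE k s} => pd I.1 xhat u) := by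
  rw [osc]
  congr 1
  ext y
  simp [mem_degLE, eq_comm]

theorem fderiv_apply_single_mem_osc (hU : IsOpen U) (hx : AnalyticOnNhd ℂ xhat U) (hu : u ∈ U)
    (hstab : osc xhat (s + 1) u = osc xhat s u)
    (hrank : ∀ᶠ v in 𝓝 u, finrank ℂ (osc xhat s v) = finrank ℂ (osc xhat s u))
    {g : (Fin k → ℂ) → (Fin (N + 1) → ℂ)} (hg : DifferentiableAt ℂ g u)
    (hgs : ∀ᶠ v in 𝓝 u, g v ∈ osc xhat s v) (j : Fin k) :
    fderiv ℂ g u (Pi.single j 1) ∈ osc xhat s u := by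
  classical
  let ι := {I : Fin k → ℕ // I ∈ degLE k s}
  let P := (ContinuousLinearEquiv.piRing (𝕜 := ℂ) (E := Fin (N + 1) → ℂ) ι).symm
  let A : (Fin k → ℂ) → (ι → ℂ) →L[ℂ] (Fin (N + 1) → ℂ) := fun v =>
    P fun I => pd I.1 xhat v
  have hrange : ∀ v, LinearMap.range (A v).toLinearMap = osc xhat s v := fun v => by
    rw [range_piRing_symm, osc_eq_span_range]
  have hA : HasFDerivAt A ((P : (ι → Fin (N + 1) → ℂ) →L[ℂ] _).comp
      (ContinuousLinearMap.pi fun I : ι => fderiv ℂ (pd I.1 xhat) u)) u :=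
    P.hasFDerivAt.comp u (f := fun v (I : ι) => pd I.1 xhat v) <| hasFDerivAt_pi.2 fun I =>
      ((hx.pderivList _) u hu).differentiableAt.hasFDerivAt
  have hmem := fderiv_apply_mem_range_sup_of_finrank_range_eq hA.differentiableAt
    (by filter_upwards [hrank] with v hv; rwa [hrange, hrange]) hg
    (by simpa only [hrange] using hgs) (Pi.single j 1)
  rw [hA.fderiv, hrange] at hmem
  refine (sup_le le_rfl ?_ : _ ≤ osc xhat s u) hmem
  rw [ContinuousLinearMap.comp_apply, ContinuousLinearEquiv.coe_coe, range_piRing_symm,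
    Submodule.span_le, ← hstab]
  rintro _ ⟨I, rfl⟩
  rw [ContinuousLinearMap.pi_apply, ← pd_add_single hU hx I.1 j hu]
  exact pd_mem_osc (by simp [Finset.sum_add_distrib, mem_degLE.1 I.2]) u

theorem pderivList_mem_osc (hU : IsOpen U) (hx : AnalyticOnNhd ℂ xhat U)
    (hstab : ∀ u ∈ U, osc xhat (s + 1) u = osc xhat s u) {d : ℕ}
    (hrank : ∀ u ∈ U, finrank ℂ (osc xhat s u) = d) (L : List (Fin k)) (hu : u ∈ U) :
    pderivList L xhat u ∈ osc xhat s u := by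
  induction L generalizing u with
  | nil => exact self_mem_osc u
  | cons j L ih =>
    have hUu := hU.mem_nhds hu
    exact fderiv_apply_single_mem_osc hU hx hu (hstab u hu)
      (eventually_of_mem hUu fun v hv => (hrank v hv).trans (hrank u hu).symm)
      ((hx.pderivList L) u hu).differentiableAt (eventually_of_mem hUu fun v hv => ih hv) j

end Osculating

theorem AnalyticOnNhd.coneLift {k N : ℕ} {U : Set (Fin k → ℂ)}
    {x : (Fin k → ℂ) → (Fin N → ℂ)} (hx : AnalyticOnNhd ℂ x U) :
    AnalyticOnNhd ℂ (coneLift x) U := by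
  intro u hu
  refine AnalyticAt.pi fun i => Fin.cases ?_ (fun i => ?_) i
  · simpa [_root_.coneLift] using analyticAt_const
  · simpa [_root_.coneLift] using analyticAt_pi_iff.1 (hx u hu) i

theorem osc_constant_and_subset_linear_of_stable_general (k N t : ℕ)
    (ht : 1 ≤ t)
    (U : Set (Fin k → ℂ)) (hUo : IsOpen U) (hUc : IsPreconnected U)
    (u₀ : Fin k → ℂ) (hu₀ : u₀ ∈ U)
    (x : (Fin k → ℂ) → (Fin N → ℂ)) (hx : AnalyticOnNhd ℂ x U)
    (hstab : ∀ u ∈ U, osc (coneLift x) t u = osc (coneLift x) (t - 1) u)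
    (hconst : ∀ u ∈ U, Module.finrank ℂ ↥(osc (coneLift x) (t - 1) u) =
      Module.finrank ℂ ↥(osc (coneLift x) (t - 1) u₀)) :
    (∀ u ∈ U, osc (coneLift x) (t - 1) u = osc (coneLift x) (t - 1) u₀) ∧
      ∀ u ∈ U, coneLift x u ∈ osc (coneLift x) (t - 1) u₀ := by
  obtain ⟨s, rfl⟩ : ∃ s, t = s + 1 := ⟨t - 1, by omega⟩
  rw [Nat.add_sub_cancel] at hstab hconst ⊢
  have hxhat := hx.coneLift
  have hle : ∀ u ∈ U, osc (coneLift x) s u ≤ osc (coneLift x) s u₀ := by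
    intro u hu
    refine Submodule.span_le.2 ?_
    rintro _ ⟨I, -, rfl⟩
    refine mem_of_forall_pderivList_mem hUo hUc (hxhat.pderivList _) hu₀ (fun L => ?_) hu
    rw [← pderivList_append]
    exact pderivList_mem_osc hUo hxhat hstab hconst _ hu₀
  have heq : ∀ u ∈ U, osc (coneLift x) s u = osc (coneLift x) s u₀ := fun u hu =>
    Submodule.eq_of_le_of_finrank_le (hle u hu) (hconst u hu).ge
  exact ⟨heq, fun u hu => heq u hu ▸ self_mem_osc u⟩

/-- If the `t`-th osculating space equals the `(t-1)`-th one at every point and the latter has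
constant dimension, then the osculating space is a fixed subspace and `V` lies in the linear
space `ℙ^{d_{t-1}} = ℙ(T^(t-1)(u₀))`. -/
theorem osc_constant_and_subset_linear_of_stable (k N t : ℕ) (hk : 1 ≤ k) (hN : 1 ≤ N)
    (ht : 1 ≤ t)
    (U : Set (Fin k → ℂ)) (hUo : IsOpen U) (hUc : IsPreconnected U)
    (u₀ : Fin k → ℂ) (hu₀ : u₀ ∈ U)
    (x : (Fin k → ℂ) → (Fin N → ℂ)) (hx : AnalyticOnNhd ℂ x U)
    (hstab : ∀ u ∈ U, osc (coneLift x) t u = osc (coneLift x) (t - 1) u)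
    (hconst : ∀ u ∈ U, Module.finrank ℂ ↥(osc (coneLift x) (t - 1) u) =
      Module.finrank ℂ ↥(osc (coneLift x) (t - 1) u₀)) :
    (∀ u ∈ U, osc (coneLift x) (t - 1) u = osc (coneLift x) (t - 1) u₀) ∧
      ∀ u ∈ U, coneLift x u ∈ osc (coneLift x) (t - 1) u₀ :=
  osc_constant_and_subset_linear_of_stable_general k N t ht U hUo hUc u₀ hu₀ x hx hstab hconst

end
end
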